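/- arXiv:1801.08770 — 6 statements merged into one kernel-verified Lean document; each statement's English description precedes it below -/
import Mathlib

section
/- Let L > 0 be a Lipschitz bound for K' on a compact interval containing all differences x_i(t) - x_j(t), and let v_max = sup v. Then each particle velocity in the nonlocal follow-the-leader system satisfies |ẋ_i(t)| ≤ 2 L v_max for all i ∈ {0,...,N} and all t ≥ 0, uniformly in N. -/
open Set Finset

/-- Discrete density `R_i(t) = 1/(N (x_{i+1}(t) - x_i(t)))`. -/
noncomputable def Rdisc (N : ℕ) (x : ℕ → ℝ → ℝ) (i : ℕ) (t : ℝ) : ℝ :=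
  1 / ((N : ℝ) * (x (i+1) t - x i t))

/-- Right-hand side of the nonlocal follow-the-leader ODE system. -/
noncomputable def ftlVel (N : ℕ) (v K' : ℝ → ℝ) (x : ℕ → ℝ → ℝ) (i : ℕ) (t : ℝ) : ℝ :=
  -(v (Rdisc N x i t) / (N : ℝ)) * ∑ j ∈ Finset.Ioc i N, K' (x i t - x j t)
    - (v (Rdisc N x (i-1) t) / (N : ℝ)) * ∑ j ∈ Finset.range i, K' (x i t - x j t)

/-- uniform bound `|ẋ_i(t)| ≤ 2 L v_max` on the particle
velocities, where `L` is a Lipschitz bound for `K'` (which vanishes at `0`) on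
a compact interval containing all the differences `x_i(t) - x_j(t)`. -/
theorem uniform_velocity_bound
    (N : ℕ) (L vmax : ℝ) (v K' : ℝ → ℝ) (x : ℕ → ℝ → ℝ)
    (hN : 0 < N) (hL : 0 ≤ L)
    (hK'0 : K' 0 = 0)
    (hLip : ∀ a b : ℝ, |a| ≤ 2 → |b| ≤ 2 → |K' a - K' b| ≤ L * |a - b|)
    (hdiff : ∀ i j, i ≤ N → j ≤ N → ∀ t, 0 ≤ t → |x i t - x j t| ≤ 2)
    (hv0 : ∀ z, 0 ≤ v z) (hvmax : ∀ z, v z ≤ vmax) :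
    ∀ i, i ≤ N → ∀ t, 0 ≤ t → |ftlVel N v K' x i t| ≤ 2 * L * vmax := by
  intro i hi t ht
  have hvm : 0 ≤ vmax := le_trans (hv0 0) (hvmax 0)
  have hNpos : (0:ℝ) < (N:ℝ) := by exact_mod_cast hN
  have hKb : ∀ j, j ≤ N → |K' (x i t - x j t)| ≤ 2 * L := by
    intro j hj
    have h1 := hLip (x i t - x j t) 0 (hdiff i j hi hj t ht) (by norm_num)
    rw [hK'0, sub_zero, sub_zero] at h1
    calc |K' (x i t - x j t)| ≤ L * |x i t - x j t| := h1
      _ ≤ L * 2 := mul_le_mul_of_nonneg_left (hdiff i j hi hj t ht) hL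
      _ = 2 * L := mul_comm _ _
  have hS1 : |∑ j ∈ Finset.Ioc i N, K' (x i t - x j t)| ≤ (N - i : ℕ) * (2 * L) := by
    calc |∑ j ∈ Finset.Ioc i N, K' (x i t - x j t)|
        ≤ ∑ j ∈ Finset.Ioc i N, |K' (x i t - x j t)| := Finset.abs_sum_le_sum_abs _ _
      _ ≤ ∑ j ∈ Finset.Ioc i N, (2 * L) := by
          apply Finset.sum_le_sum
          intro j hj
          exact hKb j (Finset.mem_Ioc.mp hj).2
      _ = (N - i : ℕ) * (2 * L) := by
          rw [Finset.sum_const, Nat.card_Ioc, nsmul_eq_mul]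
  have hS2 : |∑ j ∈ Finset.range i, K' (x i t - x j t)| ≤ (i : ℕ) * (2 * L) := by
    calc |∑ j ∈ Finset.range i, K' (x i t - x j t)|
        ≤ ∑ j ∈ Finset.range i, |K' (x i t - x j t)| := Finset.abs_sum_le_sum_abs _ _
      _ ≤ ∑ j ∈ Finset.range i, (2 * L) := by
          apply Finset.sum_le_sum
          intro j hj
          exact hKb j (le_trans (le_of_lt (Finset.mem_range.mp hj)) hi)
      _ = (i : ℕ) * (2 * L) := by
          rw [Finset.sum_const, Finset.card_range, nsmul_eq_mul]
  set c1 := v (Rdisc N x i t) / (N : ℝ) with hc1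
  set c2 := v (Rdisc N x (i-1) t) / (N : ℝ) with hc2
  have hc1n : 0 ≤ c1 := div_nonneg (hv0 _) hNpos.le
  have hc2n : 0 ≤ c2 := div_nonneg (hv0 _) hNpos.le
  have hc1u : c1 ≤ vmax / N := div_le_div_of_nonneg_right (hvmax _) hNpos.le
  have hc2u : c2 ≤ vmax / N := div_le_div_of_nonneg_right (hvmax _) hNpos.le
  set S1 := ∑ j ∈ Finset.Ioc i N, K' (x i t - x j t) with hS1d
  set S2 := ∑ j ∈ Finset.range i, K' (x i t - x j t) with hS2d
  have key : |ftlVel N v K' x i t| ≤ c1 * |S1| + c2 * |S2| := by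
    rw [ftlVel]
    calc |(-c1) * S1 - c2 * S2| ≤ |(-c1) * S1| + |c2 * S2| := abs_sub _ _
      _ = c1 * |S1| + c2 * |S2| := by
          rw [abs_mul, abs_mul, abs_neg, abs_of_nonneg hc1n, abs_of_nonneg hc2n]
  have hcast : ((N - i : ℕ) : ℝ) + (i : ℝ) = (N : ℝ) := by
    have : ((N - i : ℕ) : ℝ) = (N : ℝ) - i := by
      rw [Nat.cast_sub hi]
    rw [this]; ring
  calc |ftlVel N v K' x i t| ≤ c1 * |S1| + c2 * |S2| := key
    _ ≤ (vmax / N) * ((N - i : ℕ) * (2 * L)) + (vmax / N) * ((i : ℕ) * (2 * L)) := by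
        gcongr <;> first
          | exact hS1
          | exact hS2
          | positivity
    _ = (vmax / N) * ((((N - i : ℕ) : ℝ) + (i : ℝ)) * (2 * L)) := by ring
    _ = 2 * L * vmax := by rw [hcast]; field_simp
  done
end

section
/- (Uniform time continuity in Wasserstein distance) Under the assumptions of the main theorem, there is a constant C > 0 depending only on K, v, and the support of ρ̄ (independent of N) such that the discrete densities satisfy d_{W¹}(ρ^N(t,·), ρ^N(s,·)) ≤ C |t - s| for all 0 < s, t < T and all N ∈ ℕ. -/
open Set Finset MeasureTheory

/-- The pseudo-inverse of the cumulative distribution function of the discrete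
density `ρ^N(t,·)`:
`X(z) = Σ_i (x_i + (z - i/N)/R_i) 1_{[i/N,(i+1)/N)}(z)`. -/
noncomputable def pseudoInv (N : ℕ) (x : ℕ → ℝ → ℝ) (t z : ℝ) : ℝ :=
  ∑ i ∈ Finset.range N,
    Set.indicator (Set.Ico ((i : ℝ) / (N : ℝ)) (((i : ℝ) + 1) / (N : ℝ)))
      (fun w => x i t + (w - (i : ℝ) / (N : ℝ)) * ((N : ℝ) * (x (i+1) t - x i t))) z

/-- Pointwise bound on the difference of pseudo-inverses in terms of a
uniform bound on particle displacements. -/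
lemma pseudoInv_diff_bound (N : ℕ) (hN : 1 ≤ N) (x : ℕ → ℝ → ℝ) (t s : ℝ) (B : ℝ)
    (hB : 0 ≤ B) (h : ∀ i, i ≤ N → |x i t - x i s| ≤ B) (z : ℝ) :
    |pseudoInv N x t z - pseudoInv N x s z| ≤ B := by
  have hN0 : (0:ℝ) < N := by exact_mod_cast hN
  unfold pseudoInv
  rw [← Finset.sum_sub_distrib]
  by_cases hz : ∃ i ∈ Finset.range N, z ∈ Set.Ico ((i:ℝ)/N) (((i:ℝ)+1)/N)
  · obtain ⟨i0, hi0, hzmem⟩ := hz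
    have hi0N : i0 < N := Finset.mem_range.mp hi0
    rw [Finset.sum_eq_single i0]
    · rw [Set.indicator_of_mem hzmem, Set.indicator_of_mem hzmem]
      have ha1 := h i0 hi0N.le
      have ha2 := h (i0+1) hi0N
      set c : ℝ := (i0:ℝ)/N with hc
      have hθ0 : 0 ≤ (z - c) * N := mul_nonneg (by linarith [hzmem.1]) hN0.le
      have hθ1 : (z - c) * N ≤ 1 := by
        have h2 : z - c < 1/N := by
          have : ((i0:ℝ)+1)/N = c + 1/N := by rw [hc]; ring
          have := hzmem.2
          rw [show ((i0:ℝ)+1)/N = c + 1/N from by rw [hc]; ring] at this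
          linarith
        have := mul_le_mul_of_nonneg_right h2.le hN0.le
        rw [one_div, inv_mul_cancel₀ hN0.ne'] at this
        exact this
      rw [abs_le] at ha1 ha2 ⊢
      constructor <;> nlinarith [ha1.1, ha1.2, ha2.1, ha2.2, hθ0, hθ1,
        mul_nonneg hθ0 (by linarith [ha2.2] : 0 ≤ B - (x (i0+1) t - x (i0+1) s)),
        mul_nonneg hθ0 (by linarith [ha2.1] : 0 ≤ (x (i0+1) t - x (i0+1) s) + B),
        mul_nonneg hθ0 (by linarith [ha1.2] : 0 ≤ B - (x i0 t - x i0 s)),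
        mul_nonneg hθ0 (by linarith [ha1.1] : 0 ≤ (x i0 t - x i0 s) + B)]
    · intro j hj hne
      have hjN : j < N := Finset.mem_range.mp hj
      have hnot : z ∉ Set.Ico ((j:ℝ)/N) (((j:ℝ)+1)/N) := by
        intro hmem
        have h1 : (i0:ℝ)/N < ((j:ℝ)+1)/N := lt_of_le_of_lt hzmem.1 hmem.2
        have h2 : (j:ℝ)/N < ((i0:ℝ)+1)/N := lt_of_le_of_lt hmem.1 hzmem.2
        rw [div_lt_div_iff₀ hN0 hN0] at h1 h2
        have h1' : (i0:ℝ) < (j:ℝ)+1 := lt_of_mul_lt_mul_right h1 hN0.le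
        have h2' : (j:ℝ) < (i0:ℝ)+1 := lt_of_mul_lt_mul_right h2 hN0.le
        have h1'' : i0 < j+1 := by exact_mod_cast h1'
        have h2'' : j < i0+1 := by exact_mod_cast h2'
        omega
      rw [Set.indicator_of_notMem hnot, Set.indicator_of_notMem hnot, sub_self]
    · intro hcon; exact absurd hi0 hcon
  · push_neg at hz
    rw [Finset.sum_eq_zero]
    · simpa using hB
    · intro j hj
      rw [Set.indicator_of_notMem (hz j hj), Set.indicator_of_notMem (hz j hj), sub_self]

/-- uniform time continuity in the 1-Wasserstein distance:
there is a constant `C > 0`, independent of `N`, such that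
`d_{W¹}(ρ^N(t,·), ρ^N(s,·)) ≤ C |t-s|`, expressed via the `L¹([0,1])` distance
of the pseudo-inverses of the cumulative distribution functions. -/
theorem wasserstein_time_equicontinuity
    (T a b L vmax : ℝ) (v K' : ℝ → ℝ) (x : ℕ → ℕ → ℝ → ℝ)
    (hT : 0 < T) (hab : a < b) (hL : 0 < L) (hvmaxpos : 0 < vmax)
    (hv0 : ∀ z, 0 ≤ v z) (hvmax : ∀ z, v z ≤ vmax)
    (hK'0 : K' 0 = 0)
    (hLip : ∀ p q : ℝ, |p| ≤ b - a → |q| ≤ b - a → |K' p - K' q| ≤ L * |p - q|)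
    (hconf : ∀ N : ℕ, 1 ≤ N → ∀ i, i ≤ N → ∀ t ∈ Icc (0:ℝ) T, x N i t ∈ Icc a b)
    (hord : ∀ N : ℕ, 1 ≤ N → ∀ t ∈ Icc (0:ℝ) T, ∀ i, i < N → x N i t < x N (i+1) t)
    (hODE : ∀ N : ℕ, 1 ≤ N → ∀ i, i ≤ N → ∀ t ∈ Icc (0:ℝ) T,
      HasDerivAt (x N i) (ftlVel N v K' (x N) i t) t) :
    ∃ C > 0, ∀ N : ℕ, 1 ≤ N → ∀ s ∈ Ioo (0:ℝ) T, ∀ t ∈ Ioo (0:ℝ) T,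
      (∫ z in (0:ℝ)..1, |pseudoInv N (x N) t z - pseudoInv N (x N) s z|)
        ≤ C * |t - s| := by
  have hba : 0 < b - a := sub_pos.mpr hab
  refine ⟨2 * vmax * (L * (b - a)),
    mul_pos (mul_pos two_pos hvmaxpos) (mul_pos hL hba), ?_⟩
  set C0 : ℝ := 2 * vmax * (L * (b - a)) with hC0
  have hC0pos : 0 < C0 := mul_pos (mul_pos two_pos hvmaxpos) (mul_pos hL hba)
  intro N hN s hs t ht
  have hNpos : (0:ℝ) < N := by exact_mod_cast hN
  -- Step A : uniform bound on velocities
  have stepA : ∀ i, i ≤ N → ∀ τ ∈ Icc (0:ℝ) T, |ftlVel N v K' (x N) i τ| ≤ C0 := by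
    intro i hi τ hτ
    have hK'b : ∀ j, j ≤ N → |K' (x N i τ - x N j τ)| ≤ L * (b - a) := by
      intro j hj
      have h1 := hconf N hN i hi τ hτ
      have h2 := hconf N hN j hj τ hτ
      have habs : |x N i τ - x N j τ| ≤ b - a := by
        rw [abs_le]; exact ⟨by linarith [h1.1, h2.2], by linarith [h1.2, h2.1]⟩
      have h0 : |(0:ℝ)| ≤ b - a := by simpa using hba.le
      have := hLip (x N i τ - x N j τ) 0 habs h0
      rw [hK'0, sub_zero, sub_zero] at this
      exact this.trans (mul_le_mul_of_nonneg_left habs hL.le)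
    have hsum : ∀ (F : Finset ℕ), (∀ j ∈ F, j ≤ N) → F.card ≤ N →
        |∑ j ∈ F, K' (x N i τ - x N j τ)| ≤ (N:ℝ) * (L * (b - a)) := by
      intro F hF hcard
      calc |∑ j ∈ F, K' (x N i τ - x N j τ)|
          ≤ ∑ j ∈ F, |K' (x N i τ - x N j τ)| := Finset.abs_sum_le_sum_abs _ _
        _ ≤ ∑ _j ∈ F, L * (b - a) := Finset.sum_le_sum (fun j hj => hK'b j (hF j hj))
        _ = (F.card : ℝ) * (L * (b - a)) := by rw [Finset.sum_const, nsmul_eq_mul]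
        _ ≤ (N:ℝ) * (L * (b - a)) := by
            refine mul_le_mul_of_nonneg_right ?_ (mul_nonneg hL.le hba.le)
            exact_mod_cast hcard
    have hS1 := hsum (Finset.Ioc i N) (fun j hj => (Finset.mem_Ioc.mp hj).2)
      (by rw [Nat.card_Ioc]; omega)
    have hS2 := hsum (Finset.range i) (fun j hj => le_trans (Finset.mem_range.mp hj).le hi)
      (by rw [Finset.card_range]; omega)
    have key : ∀ (r S : ℝ), |S| ≤ (N:ℝ) * (L * (b - a)) →
        |v r / (N:ℝ) * S| ≤ vmax * (L * (b - a)) := by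
      intro r S hS
      rw [abs_mul, abs_of_nonneg (div_nonneg (hv0 r) hNpos.le)]
      calc v r / N * |S| ≤ vmax / N * ((N:ℝ) * (L * (b - a))) := by
            refine mul_le_mul ?_ hS (abs_nonneg _) (div_nonneg hvmaxpos.le hNpos.le)
            gcongr
            exact hvmax r
        _ = vmax * (L * (b - a)) := by field_simp
    unfold ftlVel
    have ht1 := key (Rdisc N (x N) i τ) _ hS1
    have ht2 := key (Rdisc N (x N) (i-1) τ) _ hS2
    calc |(-(v (Rdisc N (x N) i τ) / (N:ℝ))) * (∑ j ∈ Finset.Ioc i N, K' (x N i τ - x N j τ))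
          - (v (Rdisc N (x N) (i-1) τ) / (N:ℝ)) * (∑ j ∈ Finset.range i, K' (x N i τ - x N j τ))|
        ≤ |(-(v (Rdisc N (x N) i τ) / (N:ℝ))) * (∑ j ∈ Finset.Ioc i N, K' (x N i τ - x N j τ))|
          + |(v (Rdisc N (x N) (i-1) τ) / (N:ℝ)) * (∑ j ∈ Finset.range i, K' (x N i τ - x N j τ))| :=
          abs_sub _ _
      _ ≤ vmax * (L * (b - a)) + vmax * (L * (b - a)) := by
          refine add_le_add ?_ ht2
          rw [neg_mul, abs_neg]; exact ht1
      _ = C0 := by rw [hC0]; ring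
  -- Step B : Lipschitz continuity of the particle paths
  have stepB : ∀ i, i ≤ N → |x N i t - x N i s| ≤ C0 * |t - s| := by
    intro i hi
    have := Convex.norm_image_sub_le_of_norm_hasDerivWithin_le
      (f := x N i) (f' := fun τ => ftlVel N v K' (x N) i τ) (C := C0)
      (fun τ hτ => (hODE N hN i hi τ hτ).hasDerivWithinAt)
      (fun τ hτ => by rw [Real.norm_eq_abs]; exact stepA i hi τ hτ)
      (convex_Icc 0 T) (Ioo_subset_Icc_self hs) (Ioo_subset_Icc_self ht)
    simpa [Real.norm_eq_abs] using this
  -- Step C : pointwise bound on the pseudo-inverse difference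
  have stepC : ∀ z : ℝ, |pseudoInv N (x N) t z - pseudoInv N (x N) s z| ≤ C0 * |t - s| :=
    pseudoInv_diff_bound N hN (x N) t s (C0 * |t - s|)
      (mul_nonneg hC0pos.le (abs_nonneg _)) stepB
  -- Step D : integrate
  have hD : ‖∫ z in (0:ℝ)..1, |pseudoInv N (x N) t z - pseudoInv N (x N) s z|‖
      ≤ C0 * |t - s| * |1 - 0| := by
    refine intervalIntegral.norm_integral_le_of_norm_le_const (fun z _ => ?_)
    rw [Real.norm_eq_abs, abs_abs]
    exact stepC z
  calc (∫ z in (0:ℝ)..1, |pseudoInv N (x N) t z - pseudoInv N (x N) s z|)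
      ≤ ‖∫ z in (0:ℝ)..1, |pseudoInv N (x N) t z - pseudoInv N (x N) s z|‖ :=
        le_abs_self _
    _ ≤ C0 * |t - s| * |1 - 0| := hD
    _ = C0 * |t - s| := by norm_num
end

section
/- For each N ∈ ℕ, the 1-Wasserstein distance between the piecewise-constant discrete density ρ^N(t,·) and the empirical measure ρ̂^N(t) = (1/N) Σ_{i=0}^N δ_{x_i(t)} satisfies d_{W¹}(ρ^N(t,·), ρ̂^N(t)) ≤ C/N for all t ≥ 0, where C depends only on the diameter of the support of ρ̄ (in fact C = (1/2)·meas(supp ρ̄) suffices given the uniform support bound). -/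
open Set Finset MeasureTheory

/-- The pseudo-inverse of the cumulative distribution function of the
empirical measure `ρ̂^N(t) = (1/N) Σ_i δ_{x_i(t)}`. -/
noncomputable def pseudoInvEmp (N : ℕ) (x : ℕ → ℝ → ℝ) (t z : ℝ) : ℝ :=
  ∑ i ∈ Finset.range N,
    Set.indicator (Set.Ico ((i : ℝ) / (N : ℝ)) (((i : ℝ) + 1) / (N : ℝ)))
      (fun _ => x i t) z

/-!
On the `i`-th cell `[i/N, (i+1)/N)` the two pseudo-inverses differ by a linear ramp rising from
`0` to `x_{i+1} - x_i`, which is nonnegative because the particles are ordered; its integral is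
`(x_{i+1} - x_i) / (2N)`. Summing over the cells telescopes to
`(x_N - x_0) / (2N) ≤ (b - a) / (2N)`.
-/

theorem intervalIntegral_indicator_Ico {f : ℝ → ℝ} {a b p q : ℝ}
    (hap : a ≤ p) (hpq : p ≤ q) (hqb : q ≤ b) :
    ∫ z in a..b, (Ico p q).indicator f z = ∫ z in p..q, f z := by
  have hsub : Ico p q ⊆ Icc a b := fun z hz => ⟨hap.trans hz.1, hz.2.le.trans hqb⟩
  rw [intervalIntegral.integral_of_le (hap.trans (hpq.trans hqb)), ← integral_Icc_eq_integral_Ioc,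
    setIntegral_indicator measurableSet_Ico, inter_eq_right.mpr hsub,
    integral_Ico_eq_integral_Ioc, intervalIntegral.integral_of_le hpq]

theorem intervalIntegral_sub_left_mul_const (p q C : ℝ) :
    ∫ z in p..q, (z - p) * C = (q - p) ^ 2 / 2 * C := by
  rw [intervalIntegral.integral_mul_const, intervalIntegral.integral_comp_sub_right (fun z => z),
    sub_self, integral_id]
  ring

theorem Continuous.intervalIntegrable_indicator_Ico {f : ℝ → ℝ} (hf : Continuous f)
    (a b p q : ℝ) : IntervalIntegrable ((Ico p q).indicator f) volume a b :=
  ((hf.integrableOn_Icc.mono_set Ico_subset_Icc_self).integrable_indicator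
    measurableSet_Ico).intervalIntegrable

theorem intervalIntegral_indicator_ramp {N i : ℕ} (hi : i < N) (C : ℝ) :
    ∫ z in (0 : ℝ)..1, (Ico ((i : ℝ) / N) (((i : ℝ) + 1) / N)).indicator
      (fun w => (w - (i : ℝ) / N) * (N * C)) z = C / (2 * N) := by
  have hN : (0 : ℝ) < N := by exact_mod_cast (Nat.zero_le i).trans_lt hi
  have hiN : (i : ℝ) + 1 ≤ N := by exact_mod_cast hi
  rw [intervalIntegral_indicator_Ico (by positivity) (by gcongr; linarith)
      ((div_le_one hN).mpr hiN), intervalIntegral_sub_left_mul_const]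
  field_simp
  ring

theorem pseudoInv_sub_pseudoInvEmp (N : ℕ) (x : ℕ → ℝ → ℝ) (t z : ℝ) :
    pseudoInv N x t z - pseudoInvEmp N x t z =
      ∑ i ∈ range N, (Ico ((i : ℝ) / N) (((i : ℝ) + 1) / N)).indicator
        (fun w => (w - (i : ℝ) / N) * (N * (x (i + 1) t - x i t))) z := by
  rw [pseudoInv, pseudoInvEmp, ← sum_sub_distrib]
  refine sum_congr rfl fun i _ => ?_
  simp only [indicator_apply]
  split_ifs <;> ring

theorem wasserstein_discrete_vs_empirical_general
    (N : ℕ) (a b : ℝ) (x : ℕ → ℝ → ℝ)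
    (hord : ∀ t, 0 ≤ t → ∀ i, i < N → x i t < x (i+1) t)
    (hconf : ∀ t, 0 ≤ t → ∀ i, i ≤ N → x i t ∈ Icc a b) :
    ∀ t, 0 ≤ t →
      (∫ z in (0:ℝ)..1, |pseudoInv N x t z - pseudoInvEmp N x t z|)
        ≤ ((b - a) / 2) / (N : ℝ) := by
  intro t ht
  set cell : ℕ → ℝ → ℝ := fun i => (Ico ((i : ℝ) / N) (((i : ℝ) + 1) / N)).indicator
    (fun w => (w - (i : ℝ) / N) * (N * (x (i + 1) t - x i t)))
  have hcell_nonneg : ∀ i ∈ range N, ∀ z, 0 ≤ cell i z := fun i hi z =>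
    indicator_nonneg (fun w hw => mul_nonneg (sub_nonneg.mpr hw.1)
      (mul_nonneg N.cast_nonneg (sub_nonneg.mpr (hord t ht i (mem_range.mp hi)).le))) z
  calc (∫ z in (0:ℝ)..1, |pseudoInv N x t z - pseudoInvEmp N x t z|)
      = ∫ z in (0:ℝ)..1, ∑ i ∈ range N, cell i z := by
        congr 1 with z
        rw [pseudoInv_sub_pseudoInvEmp, abs_of_nonneg (sum_nonneg fun i hi => hcell_nonneg i hi z)]
    _ = ∑ i ∈ range N, ∫ z in (0:ℝ)..1, cell i z :=
        intervalIntegral.integral_finsetSum fun i _ =>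
          Continuous.intervalIntegrable_indicator_Ico (by fun_prop) _ _ _ _
    _ = ∑ i ∈ range N, (x (i + 1) t - x i t) / (2 * N) :=
        sum_congr rfl fun i hi => intervalIntegral_indicator_ramp (mem_range.mp hi) _
    _ = (x N t - x 0 t) / (2 * N) := by rw [← sum_div, sum_range_sub (fun i => x i t)]
    _ ≤ ((b - a) / 2) / N := by
        rw [div_div, mul_comm]
        gcongr
        exacts [(hconf t ht N le_rfl).2, (hconf t ht 0 N.zero_le).1]

/-- the 1-Wasserstein distance (expressed as the `L¹([0,1])`
distance of the pseudo-inverses) between the discrete density `ρ^N(t,·)` and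
the empirical measure `ρ̂^N(t)` is at most `C/N`, with
`C = (1/2)·(length of the convex hull of supp ρ̄)`. -/
theorem wasserstein_discrete_vs_empirical
    (N : ℕ) (a b : ℝ) (x : ℕ → ℝ → ℝ)
    (hN : 1 ≤ N) (hab : a ≤ b)
    (hord : ∀ t, 0 ≤ t → ∀ i, i < N → x i t < x (i+1) t)
    (hconf : ∀ t, 0 ≤ t → ∀ i, i ≤ N → x i t ∈ Icc a b) :
    ∀ t, 0 ≤ t →
      (∫ z in (0:ℝ)..1, |pseudoInv N x t z - pseudoInvEmp N x t z|)
        ≤ ((b - a) / 2) / (N : ℝ) :=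
  wasserstein_discrete_vs_empirical_general N a b x hord hconf
end

section
/- (Sign cancellation in the TV estimate) Let v be decreasing and let K'(x) have the sign of x. For indices 1 ≤ i ≤ N-1 define I_i = -(v(R_{i+1}) - v(R_i)) Σ_{j>i+1} K'(x_{i+1} - x_j) - (v(R_i) - v(R_{i-1})) Σ_{j<i} K'(x_i - x_j), where x_0 < x_1 < ... < x_N. If R_{i+1} > R_i and R_{i-1} > R_i (i.e. μ_i = -2) then I_i < 0; if R_{i+1} < R_i and R_{i-1} < R_i (i.e. μ_i = 2) then I_i > 0. Consequently -Σ_{i=1}^{N-1} μ_i R_i² I_i ≤ 0, where μ_i = sign(R_i - R_{i+1}) - sign(R_{i-1} - R_i). -/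
open Finset

lemma TV_aux (v : ℝ → ℝ) (hv : StrictAnti v)
    (a b c S1 S2 r : ℝ) (hS1 : S1 ≤ 0) (hS2 : 0 < S2) :
    0 ≤ (Real.sign (b - c) - Real.sign (a - b)) * r ^ 2 *
      (-(v c - v b) * S1 - (v b - v a) * S2) := by
  have key : 0 ≤ (Real.sign (b - c) - Real.sign (a - b)) *
      (-(v c - v b) * S1 - (v b - v a) * S2) := by
    rcases lt_trichotomy b c with h1 | h1 | h1 <;>
      rcases lt_trichotomy a b with h2 | h2 | h2
    · rw [Real.sign_of_neg (by linarith : b - c < 0),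
        Real.sign_of_neg (by linarith : a - b < 0)]
      norm_num
    · rw [h2, Real.sign_of_neg (by linarith [h2] : b - c < 0), sub_self, Real.sign_zero]
      have hvb := hv h1
      nlinarith [mul_nonpos_of_nonneg_of_nonpos
        (by linarith : (0:ℝ) ≤ -(v c - v b)) hS1]
    · rw [Real.sign_of_neg (by linarith : b - c < 0),
        Real.sign_of_pos (by linarith : 0 < a - b)]
      have hvb := hv h1
      have hva := hv h2
      nlinarith [mul_nonpos_of_nonneg_of_nonpos
        (by linarith : (0:ℝ) ≤ -(v c - v b)) hS1,
        mul_pos (by linarith : (0:ℝ) < v b - v a) hS2]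
    · subst h1
      rw [sub_self, Real.sign_zero, Real.sign_of_neg (by linarith : a - b < 0)]
      have hva := hv h2
      nlinarith [mul_pos (by linarith : (0:ℝ) < -(v b - v a)) hS2]
    · subst h1; subst h2
      simp
    · subst h1
      rw [sub_self, Real.sign_zero, Real.sign_of_pos (by linarith : 0 < a - b)]
      have hva := hv h2
      nlinarith [mul_pos (by linarith : (0:ℝ) < v b - v a) hS2]
    · rw [Real.sign_of_pos (by linarith : 0 < b - c),
        Real.sign_of_neg (by linarith : a - b < 0)]
      have hvb := hv h1
      have hva := hv h2
      nlinarith [mul_nonneg (by linarith : (0:ℝ) ≤ -(-(v c - v b))) (by linarith : (0:ℝ) ≤ -S1),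
        mul_pos (by linarith : (0:ℝ) < -(v b - v a)) hS2]
    · rw [h2, Real.sign_of_pos (by linarith [h2] : 0 < b - c), sub_self, Real.sign_zero]
      have hvb := hv h1
      nlinarith [mul_nonneg (by linarith : (0:ℝ) ≤ -(-(v c - v b)))
        (by linarith : (0:ℝ) ≤ -S1)]
    · rw [Real.sign_of_pos (by linarith : 0 < b - c),
        Real.sign_of_pos (by linarith : 0 < a - b)]
      norm_num
  have heq : (Real.sign (b - c) - Real.sign (a - b)) * r ^ 2 *
      (-(v c - v b) * S1 - (v b - v a) * S2)
      = r ^ 2 * ((Real.sign (b - c) - Real.sign (a - b)) *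
        (-(v c - v b) * S1 - (v b - v a) * S2)) := by ring
  rw [heq]
  exact mul_nonneg (sq_nonneg r) key

/-- sign cancellation in the TV estimate: the terms
`I_i = -(v(R_{i+1}) - v(R_i)) Σ_{j>i+1} K'(x_{i+1} - x_j)
      - (v(R_i) - v(R_{i-1})) Σ_{j<i} K'(x_i - x_j)`
have a definite sign when `μ_i = ∓2`, and consequently
`-Σ_{i=1}^{N-1} μ_i R_i² I_i ≤ 0`. -/
theorem TV_sign_cancellation
    (N : ℕ) (x R : ℕ → ℝ) (v K' : ℝ → ℝ)
    (hN : 2 ≤ N)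
    (hx : ∀ i, i < N → x i < x (i+1))
    (hR : ∀ i, 0 ≤ R i)
    (hv : StrictAnti v)
    (hK'odd : ∀ z, K' (-z) = -K' z)
    (hK'pos : ∀ z, 0 < z → 0 < K' z) :
    (∀ i, 1 ≤ i → i ≤ N - 1 →
      ((R i < R (i+1) ∧ R i < R (i-1)) →
        -(v (R (i+1)) - v (R i)) * (∑ j ∈ Finset.Ioc (i+1) N, K' (x (i+1) - x j))
          - (v (R i) - v (R (i-1))) * (∑ j ∈ Finset.range i, K' (x i - x j)) < 0) ∧
      ((R (i+1) < R i ∧ R (i-1) < R i) →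
        0 < -(v (R (i+1)) - v (R i)) * (∑ j ∈ Finset.Ioc (i+1) N, K' (x (i+1) - x j))
          - (v (R i) - v (R (i-1))) * (∑ j ∈ Finset.range i, K' (x i - x j)))) ∧
    -(∑ i ∈ Finset.Icc 1 (N-1),
        (Real.sign (R i - R (i+1)) - Real.sign (R (i-1) - R i)) * (R i)^2 *
          (-(v (R (i+1)) - v (R i)) * (∑ j ∈ Finset.Ioc (i+1) N, K' (x (i+1) - x j))
            - (v (R i) - v (R (i-1))) * (∑ j ∈ Finset.range i, K' (x i - x j)))) ≤ 0 := by
  -- strict monotonicity of x on [0, N]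
  have hxmono : ∀ q, q ≤ N → ∀ p, p < q → x p < x q := by
    intro q
    induction q with
    | zero => intro _ p hp; omega
    | succ n ih =>
      intro hn p hp
      rcases Nat.lt_succ_iff_lt_or_eq.mp hp with h | h
      · exact (ih (by omega) p h).trans (hx n (by omega))
      · subst h; exact hx p (by omega)
  have hK'neg : ∀ z, z < 0 → K' z < 0 := by
    intro z hz
    have h := hK'pos (-z) (by linarith)
    rw [hK'odd z] at h
    linarith
  have hS1 : ∀ i : ℕ, (∑ j ∈ Finset.Ioc (i+1) N, K' (x (i+1) - x j)) ≤ 0 := by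
    intro i
    apply Finset.sum_nonpos
    intro j hj
    obtain ⟨hj1, hj2⟩ := Finset.mem_Ioc.mp hj
    have : x (i+1) < x j := hxmono j hj2 (i+1) hj1
    exact le_of_lt (hK'neg _ (by linarith))
  have hS2 : ∀ i : ℕ, 1 ≤ i → i ≤ N - 1 →
      0 < ∑ j ∈ Finset.range i, K' (x i - x j) := by
    intro i hi1 hi2
    apply Finset.sum_pos
    · intro j hj
      have hji := Finset.mem_range.mp hj
      have : x j < x i := hxmono i (by omega) j hji
      exact hK'pos _ (by linarith)
    · exact Finset.nonempty_range_iff.mpr (by omega)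
  constructor
  · intro i hi1 hi2
    have h1 := hS1 i
    have h2 := hS2 i hi1 hi2
    constructor
    · rintro ⟨ha, hb⟩
      have hvc := hv ha
      have hva := hv hb
      have t1 := mul_nonpos_of_nonneg_of_nonpos
        (by linarith : (0:ℝ) ≤ -(v (R (i+1)) - v (R i))) h1
      have t2 := mul_pos (by linarith : (0:ℝ) < v (R i) - v (R (i-1))) h2
      linarith
    · rintro ⟨ha, hb⟩
      have hvc := hv ha
      have hva := hv hb
      have t1 := mul_nonneg (by linarith : (0:ℝ) ≤ -(-(v (R (i+1)) - v (R i))))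
        (by linarith : (0:ℝ) ≤ -(∑ j ∈ Finset.Ioc (i+1) N, K' (x (i+1) - x j)))
      have t2 := mul_pos (by linarith : (0:ℝ) < -(v (R i) - v (R (i-1)))) h2
      nlinarith
  · have hsum : 0 ≤ ∑ i ∈ Finset.Icc 1 (N-1),
        (Real.sign (R i - R (i+1)) - Real.sign (R (i-1) - R i)) * (R i)^2 *
          (-(v (R (i+1)) - v (R i)) * (∑ j ∈ Finset.Ioc (i+1) N, K' (x (i+1) - x j))
            - (v (R i) - v (R (i-1))) * (∑ j ∈ Finset.range i, K' (x i - x j))) := by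
      apply Finset.sum_nonneg
      intro i hi
      obtain ⟨hi1, hi2⟩ := Finset.mem_Icc.mp hi
      exact TV_aux v hv (R (i-1)) (R i) (R (i+1)) _ _ _ (hS1 i) (hS2 i hi1 hi2)
    linarith
end

section
/- (Positivity of entropy cross terms) Let v be decreasing, K' odd with K'(x)>0 for x>0, and x_0 < ... < x_N. For c ≥ 0 and 1 ≤ i ≤ N-1, with S_i = sign(R_i - c), the quantity (S_{i-1} - S_i)·[ (v(c) - v(R_i)) Σ_{j>i} K'(x_i - x_j) + (v(c) - v(R_{i-1})) Σ_{j<i} K'(x_i - x_j) ] is nonnegative. (Here sign(0) = 0.) -/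
open Finset

lemma sign_bounds_aux (a : ℝ) : -1 ≤ Real.sign a ∧ Real.sign a ≤ 1 := by
  rcases lt_trichotomy a 0 with h|h|h
  · rw [Real.sign_of_neg h]; norm_num
  · rw [h, Real.sign_zero]; norm_num
  · rw [Real.sign_of_pos h]; norm_num

/-- positivity of the entropy cross terms: with
`S_i = sign(R_i - c)` (and `sign 0 = 0`), for `1 ≤ i ≤ N-1` the quantity
`(S_{i-1} - S_i)·[(v(c) - v(R_i)) Σ_{j>i} K'(x_i - x_j)
                  + (v(c) - v(R_{i-1})) Σ_{j<i} K'(x_i - x_j)]`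
is nonnegative. -/
theorem entropy_cross_terms_nonneg
    (N : ℕ) (x R : ℕ → ℝ) (v K' : ℝ → ℝ) (c : ℝ)
    (hc : 0 ≤ c) (hR : ∀ i, 0 ≤ R i)
    (hx : ∀ i, i < N → x i < x (i+1))
    (hv : Antitone v)
    (hK'odd : ∀ z, K' (-z) = -K' z)
    (hK'pos : ∀ z, 0 < z → 0 < K' z) :
    ∀ i, 1 ≤ i → i ≤ N - 1 →
      0 ≤ (Real.sign (R (i-1) - c) - Real.sign (R i - c)) *
        ((v c - v (R i)) * (∑ j ∈ Finset.Ioc i N, K' (x i - x j))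
          + (v c - v (R (i-1))) * (∑ j ∈ Finset.range i, K' (x i - x j))) := by
  intro i hi1 hiN
  have hN2 : 2 ≤ N := by omega
  have hiN' : i < N := by omega
  -- x is strictly increasing up to index N
  have hmono : ∀ a b : ℕ, a < b → b ≤ N → x a < x b := by
    intro a b hab hbN
    induction b with
    | zero => omega
    | succ n ih =>
      rcases Nat.lt_or_ge a n with h | h
      · exact (ih h (by omega)).trans (hx n (by omega))
      · have : a = n := by omega
        subst this
        exact hx a (by omega)
  -- the sum over j > i is nonpositive
  have hP : (∑ j ∈ Finset.Ioc i N, K' (x i - x j)) ≤ 0 := by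
    apply Finset.sum_nonpos
    intro j hj
    rw [Finset.mem_Ioc] at hj
    have hxx : x i < x j := hmono i j hj.1 hj.2
    have : K' (x i - x j) = -K' (x j - x i) := by
      rw [← hK'odd]; ring_nf
    rw [this]
    have := hK'pos (x j - x i) (by linarith)
    linarith
  -- the sum over j < i is nonnegative
  have hQ : 0 ≤ (∑ j ∈ Finset.range i, K' (x i - x j)) := by
    apply Finset.sum_nonneg
    intro j hj
    rw [Finset.mem_range] at hj
    have hxx : x j < x i := hmono j i hj (by omega)
    exact le_of_lt (hK'pos _ (by linarith))
  set Sa := Real.sign (R (i-1) - c) with hSa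
  set Sb := Real.sign (R i - c) with hSb
  -- key sign facts
  have h1 : (Sa - Sb) * (v c - v (R i)) ≤ 0 := by
    rcases lt_trichotomy (R i - c) 0 with h|h|h
    · have hb : Sb = -1 := Real.sign_of_neg h
      have hv1 : v c ≤ v (R i) := hv (by linarith)
      have ha := (sign_bounds_aux (R (i-1) - c)).1
      rw [← hSa] at ha
      nlinarith
    · have : R i = c := by linarith
      rw [this]
      simp
    · have hb : Sb = 1 := Real.sign_of_pos h
      have hv1 : v (R i) ≤ v c := hv (by linarith)
      have ha := (sign_bounds_aux (R (i-1) - c)).2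
      rw [← hSa] at ha
      nlinarith
  have h2 : 0 ≤ (Sa - Sb) * (v c - v (R (i-1))) := by
    rcases lt_trichotomy (R (i-1) - c) 0 with h|h|h
    · have ha : Sa = -1 := Real.sign_of_neg h
      have hv1 : v c ≤ v (R (i-1)) := hv (by linarith)
      have hb := (sign_bounds_aux (R i - c)).1
      rw [← hSb] at hb
      nlinarith
    · have : R (i-1) = c := by linarith
      rw [this]
      simp
    · have ha : Sa = 1 := Real.sign_of_pos h
      have hv1 : v (R (i-1)) ≤ v c := hv (by linarith)
      have hb := (sign_bounds_aux (R i - c)).2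
      rw [← hSb] at hb
      nlinarith
  nlinarith [mul_nonneg h2 hQ, mul_nonneg (neg_nonneg.mpr h1) (neg_nonneg.mpr hP)]
end

section
/- (Uniqueness of discrete steady state) Assume (Av) with M = 1 and (AK) with K'(x) > 0 for all x > 0 (K' supported on all of ℝ). For the N-particle nonlocal follow-the-leader system with total mass 1, the equally-spaced configuration x̃_{i+1} = x̃_1 + i/N (so that R_i = 1 and v(R_i) = 0 for all i) is a stationary solution; moreover, any ordered configuration in which some gap satisfies x_{I+1} - x_I > 1/N (so R_I < 1, v(R_I) > 0) while all other gaps equal 1/N is not stationary: the particle x_I has strictly positive velocity ẋ_I = -(v(R_I)/N) Σ_{j>I} K'(x_I - x_j) > 0. -/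
open Finset

/-- Velocity of the `i`-th of `N` particles (each of mass `1/N`, indexed by
`0, …, N-1`) in the static configuration `y` for the nonlocal
follow-the-leader system:
`ẋ_i = -(v(R_i)/N) Σ_{j>i} K'(y_i - y_j) - (v(R_{i-1})/N) Σ_{j<i} K'(y_i - y_j)`
with `R_i = 1/(N(y_{i+1} - y_i))`. -/
noncomputable def velS (N : ℕ) (v K' : ℝ → ℝ) (y : ℕ → ℝ) (i : ℕ) : ℝ :=
  -(v (1 / ((N : ℝ) * (y (i+1) - y i))) / (N : ℝ)) *
      ∑ j ∈ Finset.Ioc i (N-1), K' (y i - y j)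
    - (v (1 / ((N : ℝ) * (y i - y (i-1)))) / (N : ℝ)) *
      ∑ j ∈ Finset.range i, K' (y i - y j)

/-! In the equally spaced configuration every density `R_i` equals `1`, so every speed factor
`v(R_i)` vanishes. With one enlarged gap at `I`, only the forward interaction of `x_I` survives:
its factor `v(R_I)` is positive, and every particle ahead of `x_I` lies strictly to its right, so
each `K'(x_I - x_j)` is negative by oddness. -/

variable {N : ℕ} {v K' : ℝ → ℝ} {y : ℕ → ℝ}

lemma one_div_mul_gap_eq_one (hN : N ≠ 0) {a b : ℝ} (h : b - a = 1 / N) :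
    1 / ((N : ℝ) * (b - a)) = 1 := by
  rw [h]
  field_simp

lemma velS_eq_of_left_gap (hN : N ≠ 0) (hv1 : v 1 = 0) {i : ℕ}
    (hleft : 0 < i → y i - y (i - 1) = 1 / N) :
    velS N v K' y i =
      -(v (1 / ((N : ℝ) * (y (i + 1) - y i))) / N) * ∑ j ∈ Ioc i (N - 1), K' (y i - y j) := by
  rcases Nat.eq_zero_or_pos i with rfl | hi
  · simp [velS]
  · simp [velS, one_div_mul_gap_eq_one hN (hleft hi), hv1]

lemma velS_eq_zero_of_gaps (hN : N ≠ 0) (hv1 : v 1 = 0) {i : ℕ}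
    (hleft : 0 < i → y i - y (i - 1) = 1 / N) (hright : y (i + 1) - y i = 1 / N) :
    velS N v K' y i = 0 := by
  simp [velS_eq_of_left_gap hN hv1 hleft, one_div_mul_gap_eq_one hN hright, hv1]

lemma v_one_div_mul_gap_pos (hN : N ≠ 0) (hvpos : ∀ r, 0 ≤ r → r < 1 → 0 < v r) {a b : ℝ}
    (h : 1 / (N : ℝ) < b - a) : 0 < v (1 / ((N : ℝ) * (b - a))) := by
  have hNpos : (0 : ℝ) < N := by positivity
  have hgap : 0 < b - a := (one_div_pos.mpr hNpos).trans h
  refine hvpos _ (by positivity) ((div_lt_one (by positivity)).mpr ?_)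
  rwa [div_lt_iff₀' hNpos] at h

lemma sum_K'_sub_neg (hK'odd : ∀ z, K' (-z) = -K' z) (hK'pos : ∀ z, 0 < z → 0 < K' z)
    {s : Finset ℕ} (hs : s.Nonempty) {a : ℝ} (h : ∀ j ∈ s, a < y j) :
    ∑ j ∈ s, K' (a - y j) < 0 := by
  refine Finset.sum_neg (fun j hj => ?_) hs
  rw [← neg_sub, hK'odd, neg_neg_iff_pos]
  exact hK'pos _ (sub_pos.mpr (h j hj))

lemma velS_pos_of_enlarged_gap (hv1 : v 1 = 0) (hvpos : ∀ r, 0 ≤ r → r < 1 → 0 < v r)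
    (hK'odd : ∀ z, K' (-z) = -K' z) (hK'pos : ∀ z, 0 < z → 0 < K' z) {I : ℕ} (hI : I + 1 < N)
    (hgaps : ∀ i, i + 1 < N → i ≠ I → y (i + 1) - y i = 1 / N)
    (hbig : 1 / (N : ℝ) < y (I + 1) - y I) :
    0 < velS N v K' y I := by
  have hN : N ≠ 0 := by omega
  have hinv : (0 : ℝ) < 1 / N := one_div_pos.mpr (by positivity)
  have hstep : ∀ i, I ≤ i → i + 1 < N → y i < y (i + 1) := by
    intro i _ hi
    rcases eq_or_ne i I with rfl | hne
    · linarith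
    · linarith [hgaps i hi hne]
  have hmono : StrictMonoOn y (Set.Icc I (N - 1)) :=
    strictMonoOn_of_lt_add_one Set.ordConnected_Icc fun i _ hi hi1 =>
      hstep i hi.1 (by rw [Set.mem_Icc] at hi1; omega)
  have hsum : ∑ j ∈ Ioc I (N - 1), K' (y I - y j) < 0 := by
    refine sum_K'_sub_neg hK'odd hK'pos ⟨I + 1, mem_Ioc.mpr ⟨by omega, by omega⟩⟩ fun j hj => ?_
    rw [mem_Ioc] at hj
    exact hmono ⟨le_rfl, by omega⟩ ⟨hj.1.le, hj.2⟩ hj.1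
  have hleft : 0 < I → y I - y (I - 1) = 1 / N := fun hI0 => by
    simpa [Nat.sub_add_cancel hI0] using hgaps (I - 1) (by omega) (by omega)
  rw [velS_eq_of_left_gap hN hv1 hleft, neg_mul, neg_pos]
  exact mul_neg_of_pos_of_neg (div_pos (v_one_div_mul_gap_pos hN hvpos hbig) (by positivity)) hsum

theorem discrete_steady_state_general
    (N : ℕ) (v K' : ℝ → ℝ) (x1 : ℝ)
    (hv1 : v 1 = 0)
    (hvpos : ∀ r, 0 ≤ r → r < 1 → 0 < v r)
    (hK'odd : ∀ z, K' (-z) = -K' z)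
    (hK'pos : ∀ z, 0 < z → 0 < K' z) :
    (∀ i, i < N → velS N v K' (fun j => x1 + (j : ℝ) / (N : ℝ)) i = 0) ∧
    (∀ (y : ℕ → ℝ) (I : ℕ), I + 1 < N →
      (∀ i, i + 1 < N → i ≠ I → y (i+1) - y i = 1 / (N : ℝ)) →
      1 / (N : ℝ) < y (I+1) - y I →
      0 < velS N v K' y I) := by
  refine ⟨fun i hi => ?_, fun y I hI hgaps hbig =>
    velS_pos_of_enlarged_gap hv1 hvpos hK'odd hK'pos hI hgaps hbig⟩
  have hN : N ≠ 0 := by omega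
  have hgap : ∀ k : ℕ, 0 < k → x1 + (k : ℝ) / N - (x1 + ((k - 1 : ℕ) : ℝ) / N) = 1 / N :=
    fun k hk => by rw [Nat.cast_pred hk]; ring
  exact velS_eq_zero_of_gaps hN hv1 (hgap i) (by simpa using hgap (i + 1) i.succ_pos)

/-- uniqueness of the discrete steady state, with `M = 1`:
the equally-spaced configuration `x̃_i = x̃_1 + i/N` (all gaps `1/N`, so
`R_i = 1` and `v(R_i) = 0`) is stationary, and any ordered configuration with
exactly one enlarged gap `x_{I+1} - x_I > 1/N` (all other gaps `= 1/N`) is not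
stationary: the particle `x_I` has strictly positive velocity. -/
theorem discrete_steady_state
    (N : ℕ) (v K' : ℝ → ℝ) (x1 : ℝ)
    (hN : 2 ≤ N)
    (hv1 : v 1 = 0)
    (hvpos : ∀ r, 0 ≤ r → r < 1 → 0 < v r)
    (hvanti : Antitone v)
    (hK'odd : ∀ z, K' (-z) = -K' z)
    (hK'pos : ∀ z, 0 < z → 0 < K' z) :
    (∀ i, i < N → velS N v K' (fun j => x1 + (j : ℝ) / (N : ℝ)) i = 0) ∧
    (∀ (y : ℕ → ℝ) (I : ℕ), I + 1 < N →
      (∀ i, i + 1 < N → i ≠ I → y (i+1) - y i = 1 / (N : ℝ)) →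
      1 / (N : ℝ) < y (I+1) - y I →
      0 < velS N v K' y I) :=
  discrete_steady_state_general N v K' x1 hv1 hvpos hK'odd hK'pos
end
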